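/- arXiv:0711.4898 — 8 statements merged into one kernel-verified Lean document; each statement's English description precedes it below -/
import Mathlib

section
/- For every n ≥ 1, the coefficients c(n,k) of the power series expansion of 1/Φ_n(x) depend only on k modulo n; that is, c(n,k) = c(n, k + n) for all k ≥ 0. -/
/-!
Since `Φ_n ∣ X^n - 1`, write `X^n - 1 = Φ_n * q`. Multiplying `Φ_n * g = 1` by `q` gives
`(X^n - 1) * g = q`, a polynomial of degree `n - φ(n) < n`. Comparing coefficients of `x^(k+n)`
gives `c(n,k) - c(n,k+n) = 0`.
-/

open Polynomial

theorem PowerSeries.coeff_eq_coeff_add_of_X_pow_sub_one_mul_eq {R : Type*} [Ring R] {n : ℕ}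
    {g : PowerSeries R} {q : R[X]} (h : (PowerSeries.X ^ n - 1) * g = (q : PowerSeries R))
    (hq : q.natDegree < n) (k : ℕ) : PowerSeries.coeff k g = PowerSeries.coeff (k + n) g := by
  have hcoeff := congrArg (PowerSeries.coeff (k + n)) h
  rw [Polynomial.coeff_coe, coeff_eq_zero_of_natDegree_lt (by omega), sub_mul, one_mul, map_sub,
    PowerSeries.coeff_X_pow_mul] at hcoeff
  exact sub_eq_zero.mp hcoeff

theorem Polynomial.natDegree_lt_of_mul_eq_X_pow_sub_one {R : Type*} [Ring R] {n : ℕ} (hn : 0 < n)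
    {p q : R[X]} (hp : p.Monic) (hdeg : 0 < p.natDegree) (h : X ^ n - 1 = p * q) :
    q.natDegree < n := by
  rcases eq_or_ne q 0 with rfl | hq
  · simpa using hn
  have hle : (p * q).natDegree ≤ n :=
    h ▸ (natDegree_sub_le _ _).trans (by simp [natDegree_X_pow_le])
  rw [hp.natDegree_mul' hq] at hle
  omega

theorem Polynomial.Monic.coeff_inv_add_eq_of_dvd_X_pow_sub_one {R : Type*} [CommRing R] {n : ℕ}
    {p : R[X]} (hp : p.Monic) (hdeg : 0 < p.natDegree) (hdvd : p ∣ X ^ n - 1)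
    {g : PowerSeries R} (hg : (p : PowerSeries R) * g = 1) (k : ℕ) :
    PowerSeries.coeff k g = PowerSeries.coeff (k + n) g := by
  rcases Nat.eq_zero_or_pos n with rfl | hn
  · rfl
  obtain ⟨q, hq⟩ := hdvd
  refine PowerSeries.coeff_eq_coeff_add_of_X_pow_sub_one_mul_eq ?_
    (natDegree_lt_of_mul_eq_X_pow_sub_one hn hp hdeg hq) k
  have hcast : (PowerSeries.X ^ n - 1 : PowerSeries R) = ((X ^ n - 1 : R[X]) : PowerSeries R) := by
    push_cast
    rfl
  rw [hcast, hq, coe_mul, mul_right_comm, hg, one_mul]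

theorem cyclotomic_inv_coeff_periodic (n : ℕ) (hn : 1 ≤ n)
    (g : PowerSeries ℤ) (hg : (cyclotomic n ℤ : PowerSeries ℤ) * g = 1) (k : ℕ) :
    PowerSeries.coeff k g = PowerSeries.coeff (k + n) g := by
  have hdeg : 0 < (cyclotomic n ℤ).natDegree := by
    rw [natDegree_cyclotomic]
    exact Nat.totient_pos.mpr hn
  exact (cyclotomic.monic n ℤ).coeff_inv_add_eq_of_dvd_X_pow_sub_one hdeg
    (cyclotomic.dvd_X_pow_sub_one n ℤ) hg k
end

section
/- For any prime p and integers l, m ≥ 1, the set S(p^l m) equals S(pm), where S(m) = { a(mn, k) : n ≥ 1, k ≥ 0 } and a(n,k) is the kth coefficient of Φ_n. -/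
/-!
Since `Φ_{np}(X) = Φ_n(X^p)` whenever the prime `p` divides `n`, every coefficient of `Φ_n`
reappears among those of `Φ_{np}`; together with the antitonicity of `S` under divisibility this
gives `S(np) = S(n)` for `p ∣ n`, and induction on `l` finishes.
-/

open Polynomial

/-- `S(m)` is the set of all coefficients of cyclotomic polynomials of index divisible by `m`. -/
def S (m : ℕ) : Set ℤ :=
  {z | ∃ n ≥ 1, ∃ k : ℕ, (cyclotomic (m * n) ℤ).coeff k = z}

theorem S_mul_subset {a c : ℕ} (hc : c ≠ 0) : S (a * c) ⊆ S a := by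
  rintro z ⟨n, hn, k, hk⟩
  exact ⟨c * n, Nat.one_le_iff_ne_zero.2 (mul_ne_zero hc (by omega)), k, by rwa [← mul_assoc]⟩

theorem coeff_cyclotomic_mul_prime {p n : ℕ} (hp : p.Prime) (hdvd : p ∣ n) (R : Type*)
    [CommRing R] (k : ℕ) : (cyclotomic (n * p) R).coeff (k * p) = (cyclotomic n R).coeff k := by
  rw [← cyclotomic_expand_eq_cyclotomic hp hdvd, coeff_expand_mul hp.pos]

theorem S_mul_prime_of_dvd {p n : ℕ} (hp : p.Prime) (hdvd : p ∣ n) : S (n * p) = S n := by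
  refine (S_mul_subset hp.ne_zero).antisymm ?_
  rintro z ⟨c, hc, k, rfl⟩
  refine ⟨c, hc, k * p, ?_⟩
  rw [mul_right_comm, coeff_cyclotomic_mul_prime hp (hdvd.mul_right c)]

theorem S_prime_pow_mul_general (p l m : ℕ) (hp : p.Prime) (hl : 1 ≤ l) :
    S (p ^ l * m) = S (p * m) := by
  induction l, hl using Nat.le_induction with
  | base => rw [pow_one]
  | succ l hl ih =>
    rw [← ih, pow_succ, mul_right_comm,
      S_mul_prime_of_dvd hp ((dvd_pow_self p (by omega)).mul_right m)]

theorem S_prime_pow_mul (p l m : ℕ) (hp : p.Prime) (hl : 1 ≤ l) (hm : 1 ≤ m) :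
    S (p ^ l * m) = S (p * m) :=
  S_prime_pow_mul_general p l m hp hl
end

section
/- For every integer m ≥ 1, S(m) = S(κ(m)), where κ(m) = ∏_{p | m} p is the squarefree kernel (radical) of m and S(m) = { a(mn,k) : n ≥ 1, k ≥ 0 }. -/
/-!
Every prime factor of `N / κ(N)` divides `κ(N)`, so repeated use of
`Φ_{n p}(x) = Φ_n(x^p)` for `p ∣ n` gives `Φ_N(x) = Φ_{κ(N)}(x^{N/κ(N)})`. Substituting a power
of `x` only spreads the coefficients apart and pads them with zeros, so `Φ_N` and `Φ_{κ(N)}` have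
the same set of coefficients. Since `κ(m n) = κ(κ(m) n)`, the cyclotomic polynomials of index
`m n` and `κ(m) n` therefore have the same coefficients for every `n ≥ 1`.
-/

open Polynomial

open UniqueFactorizationMonoid

theorem UniqueFactorizationMonoid.radical_radical_mul {M : Type*} [CommMonoidWithZero M]
    [NormalizationMonoid M] [UniqueFactorizationMonoid M] {a : M} (ha : a ≠ 0) (b : M) :
    radical (radical a * b) = radical (a * b) := by
  classical
  obtain rfl | hb := eq_or_ne b 0
  · simp
  have : Nontrivial M := ⟨a, 0, ha⟩
  rw [radical_eq_iff_primeFactors_eq, primeFactors_mul_eq_union radical_ne_zero hb,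
    primeFactors_mul_eq_union ha hb, primeFactors_radical]

theorem Nat.div_radical_pos {n : ℕ} (hn : n ≠ 0) : 0 < n / radical n :=
  Nat.div_pos (Nat.radical_le_self_iff.mpr hn) (Nat.radical_pos n)

namespace Polynomial

theorem range_coeff_expand {R : Type*} [CommSemiring R] {e : ℕ} (he : 0 < e) (f : R[X]) :
    Set.range (expand R e f).coeff = Set.range f.coeff := by
  apply subset_antisymm
  · rintro _ ⟨k, rfl⟩
    rw [coeff_expand he]
    split_ifs
    · exact ⟨k / e, rfl⟩
    · exact ⟨f.natDegree + 1, coeff_eq_zero_of_natDegree_lt f.natDegree.lt_succ_self⟩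
  · rintro _ ⟨k, rfl⟩
    exact ⟨e * k, coeff_expand_mul' he f k⟩

variable (R : Type*) [CommRing R]

theorem cyclotomic_mul_eq_expand {r e : ℕ} (he : e ≠ 0) (hre : ∀ p, p.Prime → p ∣ e → p ∣ r) :
    cyclotomic (r * e) R = expand R e (cyclotomic r R) := by
  induction e using induction_on_primes with
  | zero => exact absurd rfl he
  | one => simp
  | prime_mul p a hp ih =>
    have hpr : p ∣ r * a := (hre p hp (dvd_mul_right p a)).mul_right a
    rw [show r * (p * a) = r * a * p by ring, ← cyclotomic_expand_eq_cyclotomic hp hpr,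
      ih (right_ne_zero_of_mul he) fun q hq hqa ↦ hre q hq (hqa.mul_left p), expand_expand]

theorem cyclotomic_eq_expand_cyclotomic_radical {n : ℕ} (hn : n ≠ 0) :
    cyclotomic n R = expand R (n / radical n) (cyclotomic (radical n) R) := by
  conv_lhs => rw [← Nat.mul_div_cancel' (radical_dvd_self (a := n))]
  exact cyclotomic_mul_eq_expand R (Nat.div_radical_pos hn).ne' fun p hp hpn ↦
    (dvd_radical_iff hp.prime.isRadical hn).mpr (hpn.trans (Nat.div_dvd_of_dvd radical_dvd_self))

theorem range_coeff_cyclotomic_radical {n : ℕ} (hn : n ≠ 0) :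
    Set.range (cyclotomic (radical n) R).coeff = Set.range (cyclotomic n R).coeff := by
  rw [cyclotomic_eq_expand_cyclotomic_radical R hn, range_coeff_expand (Nat.div_radical_pos hn)]

end Polynomial

theorem S_eq_S_radical (m : ℕ) (hm : 1 ≤ m) :
    S m = S (∏ p ∈ m.primeFactors, p) := by
  have hm0 : m ≠ 0 := by omega
  have hcoeff (n : ℕ) (hn : 1 ≤ n) : Set.range (cyclotomic (m * n) ℤ).coeff =
      Set.range (cyclotomic (radical m * n) ℤ).coeff := by
    have hn0 : n ≠ 0 := by omega
    rw [← range_coeff_cyclotomic_radical ℤ (mul_ne_zero hm0 hn0),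
      ← range_coeff_cyclotomic_radical ℤ (mul_ne_zero radical_ne_zero hn0),
      radical_radical_mul hm0]
  ext z
  rw [← Nat.radical_eq_prod_primeFactors]
  exact exists_congr fun n ↦ and_congr_right fun hn ↦ Set.ext_iff.mp (hcoeff n hn) z
end

section
/- For any prime p and integers l, m ≥ 1, R(p^l m) = R(pm), where R(m) = { c(mn,k) : n ≥ 1, k ≥ 0 } and c(n,k) is the kth coefficient of the power series 1/Φ_n(x). -/
/-!
Iterating `cyclotomic_expand_eq_cyclotomic` gives `Φ_{p^(k+1) N}(x) = Φ_{p N}(x^(p^k))`, so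
`1/Φ_{p^(k+1) N}` is `1/Φ_{p N}` with `x` replaced by `x^(p^k)`: every coefficient of `1/Φ_{p N}`
reappears, which gives `R(p m) ⊆ R(p^l m)`. The reverse inclusion is `R(a b) ⊆ R(a)`.
-/

open Polynomial

/-- `R(m)` is the set of all coefficients of the power series `1/Φ_{mn}(x)` over `n ≥ 1`. -/
def R (m : ℕ) : Set ℤ :=
  {z | ∃ n ≥ 1, ∃ k : ℕ, ∃ g : PowerSeries ℤ,
    (cyclotomic (m * n) ℤ : PowerSeries ℤ) * g = 1 ∧ PowerSeries.coeff k g = z}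

theorem PowerSeries.expand_coe {A : Type*} [CommRing A] (q : ℕ) (hq : q ≠ 0) (f : A[X]) :
    expand q hq (f : PowerSeries A) = ((Polynomial.expand A q f : A[X]) : PowerSeries A) := by
  ext n
  simp only [PowerSeries.coeff_expand, Polynomial.coeff_coe,
    Polynomial.coeff_expand (Nat.pos_of_ne_zero hq)]

theorem cyclotomic_prime_pow_succ_mul_eq_expand {p : ℕ} (hp : p.Prime) (k s : ℕ) (A : Type*)
    [CommRing A] : cyclotomic (p ^ (k + 1) * s) A = expand A (p ^ k) (cyclotomic (p * s) A) := by
  induction k with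
  | zero => simp
  | succ k ih =>
    have hdvd : p ∣ p ^ (k + 1) * s := (dvd_pow_self p k.succ_ne_zero).mul_right s
    have hsplit : p ^ (k + 1 + 1) * s = p ^ (k + 1) * s * p := by ring
    rw [hsplit, ← cyclotomic_expand_eq_cyclotomic hp hdvd, ih, ← expand_mul, ← pow_succ']

theorem R_mul_subset (a : ℕ) {b : ℕ} (hb : b ≠ 0) : R (a * b) ⊆ R a := by
  rintro z ⟨n, hn, k, g, hg, hz⟩
  exact ⟨b * n, Nat.mul_pos (Nat.pos_of_ne_zero hb) hn, k, g, by rwa [← mul_assoc], hz⟩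

theorem R_mul_subset_R_prime_pow_succ_mul {p : ℕ} (hp : p.Prime) (k m : ℕ) :
    R (p * m) ⊆ R (p ^ (k + 1) * m) := by
  rintro z ⟨n, hn, j, g, hg, rfl⟩
  have hq : p ^ k ≠ 0 := pow_ne_zero k hp.ne_zero
  refine ⟨n, hn, p ^ k * j, PowerSeries.expand (p ^ k) hq g, ?_,
    PowerSeries.coeff_expand_mul _ hq g j⟩
  rw [mul_assoc, cyclotomic_prime_pow_succ_mul_eq_expand hp, ← PowerSeries.expand_coe _ hq,
    ← map_mul, ← mul_assoc, hg, map_one]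

theorem R_prime_pow_mul_general (p l m : ℕ) (hp : p.Prime) (hl : 1 ≤ l) :
    R (p ^ l * m) = R (p * m) := by
  obtain ⟨k, rfl⟩ : ∃ k, l = k + 1 := ⟨l - 1, by omega⟩
  refine subset_antisymm ?_ (R_mul_subset_R_prime_pow_succ_mul hp k m)
  have hsplit : p ^ (k + 1) * m = p * m * p ^ k := by ring
  rw [hsplit]
  exact R_mul_subset _ (pow_ne_zero k hp.ne_zero)

theorem R_prime_pow_mul (p l m : ℕ) (hp : p.Prime) (hl : 1 ≤ l) (hm : 1 ≤ m) :
    R (p ^ l * m) = R (p * m) :=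
  R_prime_pow_mul_general p l m hp hl
end

section
/- Let m > 1 be squarefree, and let p_1 < p_2 < ⋯ < p_t be primes all congruent to 1 mod m with m < p_1 and p_t < 2p_1, and let m_1 be the product p_1⋯p_t, multiplied additionally by a prime q > 2p_1 if t is even (so that μ(m_1) = -1). Then for every k with p_t ≤ k < 2p_1, the coefficient a(m_1 m, k) of Φ_{m_1 m} equals c(m,k) - μ(m)·t·c(m, k-1), where c(m,j) are the power series coefficients of 1/Φ_m(x). -/
open Polynomial ArithmeticFunction
open scoped ArithmeticFunction.Moebius

/-!
Over `R⟦X⟧` one has `Φ_n = ∏_{d ∣ n} (1 - X ^ d) ^ μ (n / d)` for `n > 1` (Möbius inversion of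
`∏_{d ∣ n} Φ_d = X ^ n - 1`). Put `n = m₁ m` and `N = 2 p₁`. Modulo `X ^ N` every factor with
`d ≥ N` is `1`. The divisors below `N` are the divisors of `m` and the primes `pᵢ`. Because
`μ (m₁) = -1`, the divisors of `m` together give `Φ_m⁻¹ = ∑ c(m, j) X ^ j`. The primes give
`∏ (1 - X ^ pᵢ) ^ μ (m) ≡ 1 - μ (m) ∑ X ^ pᵢ`, since `X ^ (pᵢ + pⱼ) ≡ 0`. Hence
`a(m₁ m, k) = c(m, k) - μ (m) ∑ c(m, k - pᵢ)`, and `c(m, ·)` has period `m` while `pᵢ ≡ 1 [MOD m]`.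
-/

theorem Finset.prod_zpow_eq_zpow_sum {ι G : Type*} [CommGroup G] (s : Finset ι) (f : ι → ℤ)
    (a : G) : ∏ i ∈ s, a ^ f i = a ^ ∑ i ∈ s, f i := by
  have h := map_prod (zpowersHom G a) (fun i => Multiplicative.ofAdd (f i)) s
  rw [← ofAdd_sum] at h
  simpa only [zpowersHom_apply, toAdd_ofAdd] using h.symm

theorem Finset.prod_one_sub_of_mul_eq_zero {ι A : Type*} [DecidableEq ι] [CommRing A]
    {s : Finset ι} {x : ι → A} (h : ∀ i ∈ s, ∀ j ∈ s, x i * x j = 0) :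
    ∏ i ∈ s, (1 - x i) = 1 - ∑ i ∈ s, x i := by
  induction s using Finset.induction_on with
  | empty => simp
  | insert i s hi ih =>
    rw [Finset.prod_insert hi, Finset.sum_insert hi,
      ih fun j hj k hk => h j (Finset.mem_insert_of_mem hj) k (Finset.mem_insert_of_mem hk)]
    have hxi : x i * ∑ j ∈ s, x j = 0 := by
      rw [Finset.mul_sum]
      exact Finset.sum_eq_zero fun j hj =>
        h i (Finset.mem_insert_self i s) j (Finset.mem_insert_of_mem hj)
    linear_combination hxi

theorem Units.val_zpow_of_val_eq_one_sub {A : Type*} [CommRing A] {u : Aˣ} {x : A}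
    (hu : (u : A) = 1 - x) (hx : x * x = 0) (c : ℤ) : ((u ^ c : Aˣ) : A) = 1 - c * x := by
  have hinv : ((u⁻¹ : Aˣ) : A) = 1 + x :=
    Units.inv_eq_of_mul_eq_one_right (by rw [hu]; linear_combination -hx)
  induction c using Int.induction_on with
  | zero => simp
  | succ c ih =>
    rw [zpow_add_one, Units.val_mul, ih, hu]
    push_cast
    linear_combination (c : A) * hx
  | pred c ih =>
    rw [zpow_sub_one, Units.val_mul, ih, hinv]
    push_cast
    linear_combination (c : A) * hx

theorem moebius_prod_primes {F : Finset ℕ} (hF : ∀ r ∈ F, r.Prime) :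
    μ (∏ r ∈ F, r) = (-1) ^ F.card := by
  rw [isMultiplicative_moebius.map_prod_of_prime F hF,
    Finset.prod_congr rfl fun r hr => moebius_apply_prime (hF r hr), Finset.prod_const]

theorem moebius_prod_primes_div {F : Finset ℕ} (hF : ∀ r ∈ F, r.Prime) {r : ℕ} (hr : r ∈ F) :
    μ ((∏ r ∈ F, r) / r) = -μ (∏ r ∈ F, r) := by
  have hcop : r.Coprime (∏ r' ∈ F.erase r, r') := Nat.Coprime.prod_right fun r' hr' =>
    (Nat.coprime_primes (hF r hr) (hF r' (Finset.mem_of_mem_erase hr'))).2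
      (Finset.ne_of_mem_erase hr').symm
  rw [← Finset.mul_prod_erase F (fun r => r) hr, Nat.mul_div_cancel_left _ (hF r hr).pos,
    isMultiplicative_moebius.map_mul_of_coprime hcop, moebius_apply_prime (hF r hr), neg_one_mul,
    neg_neg]

theorem moebius_prod_primes_insert_of_even {P : Finset ℕ} (hP : ∀ r ∈ P, r.Prime) {q : ℕ}
    (hq : q.Prime) (hqP : q ∉ P) :
    μ (∏ r ∈ (if Even P.card then insert q P else P), r) = -1 := by
  split_ifs with hev
  · rw [moebius_prod_primes (by simpa [hq] using hP), Finset.card_insert_of_notMem hqP,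
      pow_succ, hev.neg_one_pow, one_mul]
  · rw [moebius_prod_primes hP, (Nat.not_even_iff_odd.1 hev).neg_one_pow]

theorem Nat.filter_divisors_prod_primes_mul_lt {F : Finset ℕ} (hF : ∀ r ∈ F, r.Prime) {m N : ℕ}
    (hm : m ≠ 0) (hmN : m < N) (hFN : ∀ r ∈ F, N ≤ 2 * r) :
    {d ∈ ((∏ r ∈ F, r) * m).divisors | d < N} = m.divisors ∪ {r ∈ F | r < N} := by
  have hs : ∏ r ∈ F, r ≠ 0 := Finset.prod_ne_zero_iff.2 fun r hr => (hF r hr).ne_zero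
  ext d
  simp only [Finset.mem_filter, Finset.mem_union, Nat.mem_divisors]
  constructor
  · rintro ⟨⟨hd, -⟩, hdN⟩
    obtain ⟨a, b, ha, hb, rfl⟩ := Nat.dvd_mul.1 hd
    rcases eq_or_ne a 1 with rfl | ha1
    · exact Or.inl ⟨by simpa using hb, hm⟩
    obtain ⟨r, hr, a', rfl⟩ := Nat.exists_prime_and_dvd ha1
    have hrF : r ∈ F := by
      rw [← Nat.primeFactors_prod hF]
      exact Nat.mem_primeFactors.2 ⟨hr, (dvd_mul_right r a').trans ha, hs⟩
    have hb0 : b ≠ 0 := ne_zero_of_dvd_ne_zero hm hb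
    have ha'0 : a' ≠ 0 := right_ne_zero_of_mul (ne_zero_of_dvd_ne_zero hs ha)
    -- a second factor, from `F` or from `m`, would push `d` up to `2 r ≥ N`
    obtain ⟨rfl, rfl⟩ : a' = 1 ∧ b = 1 := by
      rw [← mul_eq_one]
      by_contra h
      have : 2 ≤ a' * b := by have := mul_ne_zero ha'0 hb0; omega
      nlinarith [hFN r hrF]
    rw [mul_one, mul_one] at hdN ⊢
    exact Or.inr ⟨hrF, hdN⟩
  · rintro (⟨hd, -⟩ | ⟨hrF, hdN⟩)
    · exact ⟨⟨dvd_mul_of_dvd_right hd _, mul_ne_zero hs hm⟩,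
        (Nat.le_of_dvd (Nat.pos_of_ne_zero hm) hd).trans_lt hmN⟩
    · exact ⟨⟨(Finset.dvd_prod_of_mem _ hrF).mul_right m, mul_ne_zero hs hm⟩, hdN⟩

namespace PowerSeries

variable (R : Type*) [CommRing R]

theorem isUnit_coe_cyclotomic (n : ℕ) : IsUnit (cyclotomic n R : R⟦X⟧) := by
  rw [isUnit_iff_constantCoeff, Polynomial.constantCoeff_coe]
  rcases lt_trichotomy n 1 with hn | rfl | hn
  · simp [Nat.lt_one_iff.mp hn]
  · simp
  · simp [cyclotomic_coeff_zero R hn]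

noncomputable def cyclotomicUnit (n : ℕ) : R⟦X⟧ˣ := (isUnit_coe_cyclotomic R n).unit

/-- The unit `1 - X ^ n = -∏_{d ∣ n} Φ_d`, for `0 < n`; at `n = 0` this is `-1`, not `1 - X ^ 0`. -/
noncomputable def oneSubXPowUnit (n : ℕ) : R⟦X⟧ˣ := -∏ d ∈ n.divisors, cyclotomicUnit R d

noncomputable abbrev modXPow (N : ℕ) : R⟦X⟧ →+* R⟦X⟧ ⧸ Ideal.span {(X : R⟦X⟧) ^ N} :=
  Ideal.Quotient.mk _

variable {R}

@[simp]
theorem coe_cyclotomicUnit (n : ℕ) : (cyclotomicUnit R n : R⟦X⟧) = cyclotomic n R :=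
  IsUnit.unit_spec _

theorem coe_oneSubXPowUnit {n : ℕ} (hn : 0 < n) : (oneSubXPowUnit R n : R⟦X⟧) = 1 - X ^ n := by
  have h := congrArg coeToPowerSeries.ringHom (prod_cyclotomic_eq_X_pow_sub_one hn R)
  simp only [map_prod, map_sub, map_pow, map_one, coeToPowerSeries.ringHom_apply] at h
  simp [oneSubXPowUnit, h]

theorem cyclotomicUnit_eq_prod_pow_moebius {n : ℕ} (hn : 1 < n) :
    cyclotomicUnit R n = ∏ d ∈ n.divisors, oneSubXPowUnit R d ^ μ (n / d) := by
  have h := (prod_eq_iff_prod_pow_moebius_eq (f := cyclotomicUnit R)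
    (g := fun n => -oneSubXPowUnit R n)).1 (fun n _ => by simp [oneSubXPowUnit]) n (by omega)
  have hμ : ∑ d ∈ n.divisors, μ d = 0 := by
    rw [← coe_mul_zeta_apply, moebius_mul_coe_zeta, one_apply_ne hn.ne']
  simp only [← neg_one_mul (oneSubXPowUnit R _), mul_zpow, Finset.prod_mul_distrib] at h
  rw [← h, Nat.prod_divisorsAntidiagonal (fun a _ => (-1 : R⟦X⟧ˣ) ^ μ a),
    Finset.prod_zpow_eq_zpow_sum, hμ, zpow_zero, one_mul,
    Nat.prod_divisorsAntidiagonal' (fun a b => oneSubXPowUnit R b ^ μ a)]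

theorem periodic_coeff_of_cyclotomic_mul_eq_one [Nontrivial R] {m : ℕ} (hm : 0 < m) {g : R⟦X⟧}
    (hg : (cyclotomic m R : R⟦X⟧) * g = 1) : Function.Periodic (fun j => coeff j g) m := by
  intro j
  show coeff (j + m) g = coeff j g
  obtain ⟨Ψ, hΨ⟩ := cyclotomic.dvd_X_pow_sub_one m R
  have hdeg : Ψ.natDegree < m := by
    have hX : (Polynomial.X ^ m - 1 : R[X]).natDegree = m := by
      simpa using natDegree_X_pow_sub_C (R := R) (n := m) (r := 1)
    have hΨ0 : Ψ ≠ 0 := by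
      rintro rfl
      have h := congrArg natDegree hΨ
      rw [mul_zero, natDegree_zero, hX] at h
      omega
    have h := congrArg natDegree hΨ
    rw [(cyclotomic.monic m R).natDegree_mul' hΨ0, natDegree_cyclotomic, hX] at h
    have := Nat.totient_pos.2 hm
    omega
  have hΨg : (X ^ m - 1 : R⟦X⟧) * g = Ψ := by
    have h := congrArg ((↑) : R[X] → R⟦X⟧) hΨ
    push_cast at h
    rw [h, mul_comm (cyclotomic m R : R⟦X⟧), mul_assoc, hg, mul_one]
  have hc := congrArg (coeff (j + m)) hΨg
  rw [sub_mul, one_mul, map_sub, coeff_X_pow_mul, Polynomial.coeff_coe,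
    Polynomial.coeff_eq_zero_of_natDegree_lt (by omega)] at hc
  exact (sub_eq_zero.1 hc).symm

theorem modXPow_X_pow {N d : ℕ} (h : N ≤ d) : modXPow R N (X ^ d) = 0 := by
  rw [Ideal.Quotient.eq_zero_iff_mem, Ideal.mem_span_singleton]
  exact pow_dvd_pow X h

theorem modXPow_eq_modXPow_iff {N : ℕ} {f g : R⟦X⟧} :
    modXPow R N f = modXPow R N g ↔ X ^ N ∣ f - g := by
  rw [Ideal.Quotient.eq, Ideal.mem_span_singleton]

theorem coeff_eq_of_X_pow_dvd_sub {N k : ℕ} {f g : R⟦X⟧} (h : X ^ N ∣ f - g) (hk : k < N) :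
    coeff k f = coeff k g := by
  rw [X_pow_dvd_iff] at h
  simpa [sub_eq_zero] using h k hk

theorem unitsMap_modXPow_oneSubXPowUnit {N d : ℕ} (hd : 0 < d) (hNd : N ≤ d) :
    Units.map (modXPow R N).toMonoidHom (oneSubXPowUnit R d) = 1 := by
  ext
  simp [coe_oneSubXPowUnit hd, modXPow_X_pow hNd]

theorem unitsMap_modXPow_cyclotomicUnit {N n : ℕ} (hn : 1 < n) :
    Units.map (modXPow R N).toMonoidHom (cyclotomicUnit R n) =
      ∏ d ∈ n.divisors with d < N,
        Units.map (modXPow R N).toMonoidHom (oneSubXPowUnit R d) ^ μ (n / d) := by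
  rw [cyclotomicUnit_eq_prod_pow_moebius hn, map_prod,
    ← Finset.prod_filter_mul_prod_filter_not _ (· < N),
    Finset.prod_eq_one (s := {d ∈ n.divisors | ¬d < N}), mul_one]
  · simp only [map_zpow]
  · intro d hd
    simp only [Finset.mem_filter, Nat.mem_divisors, not_lt] at hd
    rw [map_zpow, unitsMap_modXPow_oneSubXPowUnit (Nat.pos_of_dvd_of_pos hd.1.1 (by omega)) hd.2,
      one_zpow]

theorem unitsMap_modXPow_cyclotomicUnit_prod_primes_mul {F : Finset ℕ} (hF : ∀ r ∈ F, r.Prime)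
    {m N : ℕ} (hm : 1 < m) (hmN : m < N) (hFm : ∀ r ∈ F, m < r) (hFN : ∀ r ∈ F, N ≤ 2 * r) :
    Units.map (modXPow R N).toMonoidHom (cyclotomicUnit R ((∏ r ∈ F, r) * m)) =
      Units.map (modXPow R N).toMonoidHom (cyclotomicUnit R m) ^ μ (∏ r ∈ F, r) *
        (∏ r ∈ F with r < N, Units.map (modXPow R N).toMonoidHom (oneSubXPowUnit R r)) ^
          (-(μ (∏ r ∈ F, r) * μ m)) := by
  set s := ∏ r ∈ F, r
  have hs : 0 < s := Finset.prod_pos fun r hr => (hF r hr).pos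
  have hcop : s.Coprime m := Nat.Coprime.prod_left fun r hr =>
    (Nat.Prime.coprime_iff_not_dvd (hF r hr)).2 fun h =>
      (Nat.le_of_dvd (by omega) h).not_gt (hFm r hr)
  have hdisj : Disjoint m.divisors {r ∈ F | r < N} := by
    refine Finset.disjoint_left.2 fun d hd hdF => ?_
    exact (Nat.divisor_le hd).not_gt (hFm d (Finset.mem_filter.1 hdF).1)
  rw [unitsMap_modXPow_cyclotomicUnit (by nlinarith),
    Nat.filter_divisors_prod_primes_mul_lt hF (by omega) hmN hFN, Finset.prod_union hdisj,
    cyclotomicUnit_eq_prod_pow_moebius hm, map_prod]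
  simp only [← Finset.prod_zpow (G := (R⟦X⟧ ⧸ Ideal.span {(X : R⟦X⟧) ^ N})ˣ)]
  refine congrArg₂ (· * ·) (Finset.prod_congr rfl fun d hd => ?_)
    (Finset.prod_congr rfl fun r hr => ?_)
  · have hdm := Nat.dvd_of_mem_divisors hd
    rw [map_zpow, ← zpow_mul, Nat.mul_div_assoc _ hdm, isMultiplicative_moebius.map_mul_of_coprime
      (hcop.coprime_dvd_right (Nat.div_dvd_of_dvd hdm)), mul_comm]
  · have hrF := (Finset.mem_filter.1 hr).1
    have hrs : r ∣ s := Finset.dvd_prod_of_mem _ hrF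
    rw [Nat.mul_div_right_comm hrs, isMultiplicative_moebius.map_mul_of_coprime
      (hcop.coprime_dvd_left (Nat.div_dvd_of_dvd hrs)), moebius_prod_primes_div hF hrF, neg_mul]

theorem X_pow_dvd_cyclotomic_prod_primes_mul_sub {F : Finset ℕ} (hF : ∀ r ∈ F, r.Prime)
    (hμ : μ (∏ r ∈ F, r) = -1) {m N : ℕ} (hm : 1 < m) (hmN : m < N) (hFm : ∀ r ∈ F, m < r)
    (hFN : ∀ r ∈ F, N ≤ 2 * r) {g : R⟦X⟧} (hg : (cyclotomic m R : R⟦X⟧) * g = 1) :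
    X ^ N ∣ (cyclotomic ((∏ r ∈ F, r) * m) R : R⟦X⟧) -
      g * (1 - (μ m : R⟦X⟧) * ∑ r ∈ F with r < N, X ^ r) := by
  have key := congrArg Units.val
    (unitsMap_modXPow_cyclotomicUnit_prod_primes_mul (R := R) hF hm hmN hFm hFN)
  have hXX : ∀ r ∈ {r ∈ F | r < N}, ∀ r' ∈ {r ∈ F | r < N},
      modXPow R N (X ^ r) * modXPow R N (X ^ r') = 0 := fun r hr r' hr' => by
    rw [← map_mul, ← pow_add, modXPow_X_pow]
    linarith [hFN r (Finset.mem_filter.1 hr).1, hFN r' (Finset.mem_filter.1 hr').1]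
  have hprod : (∏ r ∈ F with r < N,
      Units.map (modXPow R N).toMonoidHom (oneSubXPowUnit R r)).val =
        1 - modXPow R N (∑ r ∈ F with r < N, X ^ r) := by
    rw [Units.coe_prod, map_sum, ← Finset.prod_one_sub_of_mul_eq_zero hXX]
    refine Finset.prod_congr rfl fun r hr => ?_
    simp [coe_oneSubXPowUnit (hF r (Finset.mem_filter.1 hr).1).pos]
  have hsq : modXPow R N (∑ r ∈ F with r < N, X ^ r) *
      modXPow R N (∑ r ∈ F with r < N, X ^ r) = 0 := by
    rw [map_sum, Finset.sum_mul_sum]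
    exact Finset.sum_eq_zero fun r hr => Finset.sum_eq_zero fun r' hr' => hXX r hr r' hr'
  have hginv : ((Units.map (modXPow R N).toMonoidHom (cyclotomicUnit R m))⁻¹).val =
      modXPow R N g :=
    Units.inv_eq_of_mul_eq_one_right (by simp [← map_mul, hg])
  rw [hμ, zpow_neg_one, Units.val_mul, hginv, neg_mul, one_mul, neg_neg,
    Units.val_zpow_of_val_eq_one_sub hprod hsq] at key
  rw [← modXPow_eq_modXPow_iff, map_mul, map_sub, map_one, map_mul, map_intCast, ← key]
  simp

theorem coeff_mul_one_sub_intCast_mul_sum_X_pow (g : R⟦X⟧) (c : ℤ) {F : Finset ℕ} {k : ℕ}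
    (hk : ∀ r ∈ F, r ≤ k) :
    coeff k (g * (1 - (c : R⟦X⟧) * ∑ r ∈ F, X ^ r)) =
      coeff k g - c * ∑ r ∈ F, coeff (k - r) g := by
  rw [mul_sub, mul_one, map_sub, mul_left_comm, ← map_intCast (C (R := R)), coeff_C_mul,
    Finset.mul_sum, map_sum]
  congr 2
  exact Finset.sum_congr rfl fun r hr => by rw [coeff_mul_X_pow', if_pos (hk r hr)]

theorem coeff_cyclotomic_prod_primes_mul [Nontrivial R] {F : Finset ℕ} (hF : ∀ r ∈ F, r.Prime)
    (hμ : μ (∏ r ∈ F, r) = -1) {m N k : ℕ} (hm : 1 < m) (hmN : m < N) (hFm : ∀ r ∈ F, m < r)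
    (hFN : ∀ r ∈ F, N ≤ 2 * r) (hFmod : ∀ r ∈ F, r < N → r ≡ 1 [MOD m])
    (hFk : ∀ r ∈ F, r < N → r ≤ k) (hkN : k < N) {g : R⟦X⟧}
    (hg : (cyclotomic m R : R⟦X⟧) * g = 1) :
    (cyclotomic ((∏ r ∈ F, r) * m) R).coeff k =
      coeff k g - μ m * ({r ∈ F | r < N}.card : R) * coeff (k - 1) g := by
  have hper := periodic_coeff_of_cyclotomic_mul_eq_one (by omega) hg
  have hshift : ∀ r ∈ {r ∈ F | r < N}, coeff (k - r) g = coeff (k - 1) g := fun r hr => by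
    obtain ⟨hrF, hrN⟩ := Finset.mem_filter.1 hr
    have hrk := hFk r hrF hrN
    have hmod : k - r ≡ k - 1 [MOD m] := Nat.ModEq.add_right_cancel (hFmod r hrF hrN) (by
      rw [Nat.sub_add_cancel hrk, Nat.sub_add_cancel ((hF r hrF).pos.trans_le hrk)])
    rw [← hper.map_mod_nat, hmod, hper.map_mod_nat]
  have hdvd := X_pow_dvd_cyclotomic_prod_primes_mul_sub hF hμ hm hmN hFm hFN hg
  rw [← Polynomial.coeff_coe, coeff_eq_of_X_pow_dvd_sub hdvd hkN,
    coeff_mul_one_sub_intCast_mul_sum_X_pow _ _ fun r hr => hFk r (Finset.mem_filter.1 hr).1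
      (Finset.mem_filter.1 hr).2, Finset.sum_congr rfl hshift, Finset.sum_const, nsmul_eq_mul]
  ring

theorem coeff_cyclotomic_prod_primes_insert_of_even_mul [Nontrivial R] {P : Finset ℕ}
    (hP : ∀ r ∈ P, r.Prime) {m N k q : ℕ} (hm : 1 < m) (hmN : m < N) (hPm : ∀ r ∈ P, m < r)
    (hPN : ∀ r ∈ P, N ≤ 2 * r) (hPk : ∀ r ∈ P, r ≤ k) (hPmod : ∀ r ∈ P, r ≡ 1 [MOD m])
    (hq : q.Prime) (hkN : k < N) (hNq : N ≤ q) {g : R⟦X⟧}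
    (hg : (cyclotomic m R : R⟦X⟧) * g = 1) :
    (cyclotomic ((∏ r ∈ (if Even P.card then insert q P else P), r) * m) R).coeff k =
      coeff k g - μ m * (P.card : R) * coeff (k - 1) g := by
  have hqP : q ∉ P := fun hqP => by have := hPk q hqP; omega
  set F := if Even P.card then insert q P else P with hF
  have hFP : F ⊆ insert q P := by
    rw [hF]
    split_ifs
    exacts [subset_rfl, Finset.subset_insert q P]
  have hFN : {r ∈ F | r < N} = P := by
    have hPN : {r ∈ P | r < N} = P := Finset.filter_true_of_mem fun r hr => (hPk r hr).trans_lt hkN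
    rw [hF]
    split_ifs
    · rw [Finset.filter_insert, if_neg (by omega), hPN]
    · exact hPN
  have hFN' : ∀ r ∈ F, r < N → r ∈ P := fun r hr hrN => hFN ▸ Finset.mem_filter.2 ⟨hr, hrN⟩
  have hFprop : ∀ r ∈ F, r.Prime ∧ m < r ∧ N ≤ 2 * r := fun r hr => by
    rcases Finset.mem_insert.1 (hFP hr) with rfl | hr
    · exact ⟨hq, by omega, by omega⟩
    · exact ⟨hP r hr, hPm r hr, hPN r hr⟩
  rw [coeff_cyclotomic_prod_primes_mul (fun r hr => (hFprop r hr).1)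
    (moebius_prod_primes_insert_of_even hP hq hqP) hm hmN (fun r hr => (hFprop r hr).2.1)
    (fun r hr => (hFprop r hr).2.2) (fun r hr hrN => hPmod r (hFN' r hr hrN))
    (fun r hr hrN => hPk r (hFN' r hr hrN)) hkN hg, hFN]

end PowerSeries

theorem coeff_cyclotomic_m1m (m t : ℕ) (hm : 1 < m)
    (ht : 0 < t) (p : Fin t → ℕ) (hmono : StrictMono p)
    (hprime : ∀ i, (p i).Prime) (hcong : ∀ i, p i ≡ 1 [MOD m])
    (hlow : m < p ⟨0, ht⟩)
    (q : ℕ) (hq : q.Prime) (hq2 : 2 * p ⟨0, ht⟩ < q)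
    (m₁ : ℕ) (hm₁ : m₁ = if Even t then (∏ i, p i) * q else ∏ i, p i)
    (g : PowerSeries ℤ) (hg : (cyclotomic m ℤ : PowerSeries ℤ) * g = 1)
    (k : ℕ) (hk₁ : p ⟨t - 1, by omega⟩ ≤ k) (hk₂ : k < 2 * p ⟨0, ht⟩) :
    (cyclotomic (m₁ * m) ℤ).coeff k =
      PowerSeries.coeff k g - μ m * t * PowerSeries.coeff (k - 1) g := by
  classical
  have hp_le : ∀ i, p ⟨0, ht⟩ ≤ p i ∧ p i ≤ p ⟨t - 1, by omega⟩ := fun i =>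
    ⟨hmono.monotone (Fin.mk_le_mk.2 (Nat.zero_le _)), hmono.monotone (Fin.mk_le_mk.2 (by omega))⟩
  set P := Finset.univ.image p
  have hPcard : P.card = t := by
    rw [Finset.card_image_of_injective _ hmono.injective, Finset.card_univ, Fintype.card_fin]
  have hPk : ∀ r ∈ P, r ≤ k := Finset.forall_mem_image.2 fun i _ => (hp_le i).2.trans hk₁
  have hm₁P : m₁ = ∏ r ∈ (if Even P.card then insert q P else P), r := by
    have hPprod : ∏ r ∈ P, r = ∏ i, p i := Finset.prod_image fun i _ j _ h => hmono.injective h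
    rw [hm₁, hPcard]
    split_ifs
    · rw [Finset.prod_insert fun hqP => by have := hPk q hqP; omega, hPprod, mul_comm]
    · exact hPprod.symm
  rw [hm₁P, PowerSeries.coeff_cyclotomic_prod_primes_insert_of_even_mul
    (Finset.forall_mem_image.2 fun i _ => hprime i) hm (by omega)
    (Finset.forall_mem_image.2 fun i _ => hlow.trans_le (hp_le i).1)
    (Finset.forall_mem_image.2 fun i _ => by have := hp_le i; omega) hPk
    (Finset.forall_mem_image.2 fun i _ => hcong i) hq hk₂ hq2.le hg, hPcard]
  simp
end

section
/- Let m be squarefree with μ(m) = 1 and m > 1, and let q_1 < q_2 be the two smallest prime divisors of m. Then the power series 1/Φ_m(x) is congruent to 1 + x + x^2 + ⋯ + x^{q_1 - 1} - x^{q_2} - x^{q_2+1} modulo x^{q_2 + 2}. -/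
/-!
Möbius inversion gives `Φ_m = ∏_{d ∣ m} (1 - x^d)^{μ(m/d)}` for `m > 1`, and for squarefree `m`
with `μ m = 1` the exponent `μ (m/d)` equals `μ d`. Modulo `x^{q₂+2}` every factor with `d` other
than `1, q₁, q₂` is `1`, since such a divisor is at least `q₂ + 2` (the even number `q₂ + 1` is not a
divisor). Hence `1/Φ_m ≡ (1 - x^{q₁})(1 - x^{q₂})/(1 - x) mod x^{q₂+2}`.
-/

open Polynomial ArithmeticFunction
open scoped ArithmeticFunction.Moebius

theorem ArithmeticFunction.moebius_div_of_squarefree {m d : ℕ} (hm : Squarefree m) (hd : d ∣ m) :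
    μ (m / d) = μ m * μ d := by
  obtain ⟨e, rfl⟩ := hd
  have hd0 : 0 < d := Nat.pos_of_ne_zero (left_ne_zero_of_mul hm.ne_zero)
  rw [Nat.mul_div_cancel_left e hd0,
    isMultiplicative_moebius.map_mul_of_coprime (Nat.coprime_of_squarefree_mul hm), mul_right_comm,
    ← sq, moebius_sq_eq_one_of_squarefree hm.of_mul_left, one_mul]

theorem Polynomial.cyclotomic_mul_prod_X_pow_sub_one (n : ℕ) :
    cyclotomic n ℤ * ∏ d ∈ n.divisors with μ (n / d) = -1, (X ^ d - 1 : ℤ[X]) =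
      ∏ d ∈ n.divisors with μ (n / d) = 1, (X ^ d - 1) := by
  set A := algebraMap ℤ[X] (RatFunc ℤ)
  have hA : Function.Injective A := IsFractionRing.injective ℤ[X] (RatFunc ℤ)
  have hsplit : ∀ d ∈ n.divisors, A (X ^ d - 1) ^ μ (n / d) =
      (if μ (n / d) = 1 then A (X ^ d - 1) else 1) /
        (if μ (n / d) = -1 then A (X ^ d - 1) else 1) := fun d _ => by
    rcases moebius_eq_or (n / d) with h | h | h <;> simp [h]
  have hne : A (∏ d ∈ n.divisors with μ (n / d) = -1, (X ^ d - 1)) ≠ 0 := by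
    refine (map_ne_zero_iff A hA).2 (Finset.prod_ne_zero_iff.2 fun d hd => ?_)
    exact X_pow_sub_C_ne_zero (Nat.pos_of_mem_divisors (Finset.mem_filter.1 hd).1) 1
  have h := cyclotomic_eq_prod_X_pow_sub_one_pow_moebius (n := n) ℤ
  rw [Nat.prod_divisorsAntidiagonal' (f := fun a b => A (X ^ b - 1) ^ μ a),
    Finset.prod_congr rfl hsplit, Finset.prod_div_distrib, ← Finset.prod_filter,
    ← Finset.prod_filter, ← map_prod, ← map_prod, eq_div_iff hne] at h
  exact hA (by rw [map_mul, h])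

theorem Polynomial.cyclotomic_mul_prod_one_sub_X_pow {n : ℕ} (hn : 1 < n) :
    cyclotomic n ℤ * ∏ d ∈ n.divisors with μ (n / d) = -1, (1 - X ^ d : ℤ[X]) =
      ∏ d ∈ n.divisors with μ (n / d) = 1, (1 - X ^ d) := by
  have h := cyclotomic_mul_prod_X_pow_sub_one n
  simp only [← neg_sub (1 : ℤ[X]), Finset.prod_neg] at h
  have heval : ∀ s ⊆ n.divisors, eval 0 (∏ d ∈ s, (1 - X ^ d : ℤ[X])) = 1 := fun s hs => by
    rw [eval_prod]
    refine Finset.prod_eq_one fun d hd => ?_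
    simp [(Nat.pos_of_mem_divisors (hs hd)).ne']
  -- the two signs `(-1) ^ #s` agree because `Φ_n(0) = 1`
  have hsign := congrArg (eval 0) h
  rw [eval_mul, eval_mul, eval_mul, heval _ (Finset.filter_subset _ _),
    heval _ (Finset.filter_subset _ _), ← coeff_zero_eq_eval_zero,
    cyclotomic_coeff_zero ℤ hn] at hsign
  simp only [eval_pow, eval_neg, eval_one, mul_one, one_mul] at hsign
  replace hsign := congrArg (C : ℤ → ℤ[X]) hsign
  simp only [map_pow, map_neg, map_one] at hsign
  rw [mul_left_comm, hsign] at h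
  exact mul_left_cancel₀ (pow_ne_zero _ (neg_ne_zero.2 one_ne_zero)) h

section Nilpotent

variable {S : Type*} [CommRing S] {x : S}

theorem prod_one_sub_pow_eq_of_pow_eq_zero {N : ℕ} (hx : x ^ N = 0) {s t : Finset ℕ}
    (hts : t ⊆ s) (hbig : ∀ d ∈ s, d ∉ t → N ≤ d) :
    ∏ d ∈ s, (1 - x ^ d) = ∏ d ∈ t, (1 - x ^ d) :=
  (Finset.prod_subset hts fun d hd hdt => by rw [pow_eq_zero_of_le (hbig d hd hdt) hx, sub_zero]).symm

theorem one_sub_mul_geom_sum_sub_eq_of_pow_eq_zero {q₁ q₂ : ℕ} (hx : x ^ (q₂ + 2) = 0)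
    (hq₁ : 2 ≤ q₁) :
    (1 - x) * (∑ i ∈ Finset.range q₁, x ^ i - x ^ q₂ - x ^ (q₂ + 1)) =
      (1 - x ^ q₁) * (1 - x ^ q₂) := by
  obtain ⟨r, rfl⟩ := Nat.exists_eq_add_of_le' hq₁
  linear_combination mul_neg_geom_sum x (r + 2) + (1 - x ^ r) * hx

end Nilpotent

theorem PowerSeries.coeff_eq_of_mk_eq {R : Type*} [CommRing R] {N : ℕ} {f g : PowerSeries R}
    (h : Ideal.Quotient.mk (Ideal.span {X ^ N}) f = Ideal.Quotient.mk (Ideal.span {X ^ N}) g)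
    {k : ℕ} (hk : k < N) : coeff k f = coeff k g := by
  rw [Ideal.Quotient.eq, Ideal.mem_span_singleton] at h
  exact sub_eq_zero.mp (by rw [← map_sub]; exact X_pow_dvd_iff.mp h k hk)

namespace Nat

variable {m q₁ q₂ : ℕ}

theorem le_of_dvd_of_not_dvd (hm : m ≠ 0) (hsmall : ∀ p : ℕ, p.Prime → p ∣ m → p = q₁ ∨ q₂ ≤ p)
    {e : ℕ} (he : e ∣ m) (he1 : e ≠ 1) (hq₁e : ¬ q₁ ∣ e) : q₂ ≤ e := by
  rcases hsmall _ (minFac_prime he1) ((minFac_dvd e).trans he) with h | h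
  · exact absurd (h ▸ minFac_dvd e) hq₁e
  · exact h.trans (minFac_le (Nat.pos_of_ne_zero (ne_zero_of_dvd_ne_zero hm he)))

theorem eq_or_add_two_le_of_dvd (hsf : Squarefree m)
    (hsmall : ∀ p : ℕ, p.Prime → p ∣ m → p = q₁ ∨ q₂ ≤ p) (hq₁ : q₁.Prime) (hq₂ : q₂.Prime)
    (hlt : q₁ < q₂) {d : ℕ} (hd : d ∣ m) : d = 1 ∨ d = q₁ ∨ d = q₂ ∨ q₂ + 2 ≤ d := by
  have h2q₁ := hq₁.two_le
  by_cases hq₁d : q₁ ∣ d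
  · obtain ⟨e, rfl⟩ := hq₁d
    rcases eq_or_ne e 1 with rfl | he1
    · simp
    have hq₁e : ¬ q₁ ∣ e := fun h =>
      hq₁.one_lt.ne' (Nat.isUnit_iff.mp (hsf q₁ ((Nat.mul_dvd_mul_left q₁ h).trans hd)))
    have := le_of_dvd_of_not_dvd hsf.ne_zero hsmall (Dvd.intro_left q₁ rfl |>.trans hd) he1 hq₁e
    right; right; right; nlinarith
  · rcases eq_or_ne d 1 with rfl | hd1
    · simp
    rcases (le_of_dvd_of_not_dvd hsf.ne_zero hsmall hd hd1 hq₁d).eq_or_lt with rfl | hgt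
    · simp
    right; right; right
    by_contra hcon
    have h2 : 2 ∣ d := by
      rw [show d = q₂ + 1 by omega]
      exact (hq₂.odd_of_ne_two (by omega)).add_one.two_dvd
    rcases hsmall 2 prime_two (h2.trans hd) with h | h
    · exact hq₁d (h ▸ h2)
    · omega

end Nat

theorem map_cyclotomic_mul_one_sub_pow_mul_one_sub_pow {S : Type*} [CommRing S] (φ : ℤ[X] →+* S)
    {m q₁ q₂ : ℕ} (hm : 1 < m) (hsf : Squarefree m) (hμ : μ m = 1) (hq₁ : q₁.Prime)
    (hq₂ : q₂.Prime) (hq₁m : q₁ ∣ m) (hq₂m : q₂ ∣ m) (hlt : q₁ < q₂)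
    (hsmall : ∀ p : ℕ, p.Prime → p ∣ m → p = q₁ ∨ q₂ ≤ p) (hφ : φ X ^ (q₂ + 2) = 0) :
    φ (cyclotomic m ℤ) * ((1 - φ X ^ q₁) * (1 - φ X ^ q₂)) = 1 - φ X := by
  have hμq : ∀ {q : ℕ}, q.Prime → q ∣ m → μ (m / q) = -1 := fun hq hqm => by
    rw [moebius_div_of_squarefree hsf hqm, hμ, moebius_apply_prime hq, one_mul]
  have hbig : ∀ d ∈ m.divisors, d ≠ 1 → d ≠ q₁ → d ≠ q₂ → q₂ + 2 ≤ d := fun d hd h1 h2 h3 => by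
    rcases Nat.eq_or_add_two_le_of_dvd hsf hsmall hq₁ hq₂ hlt (Nat.dvd_of_mem_divisors hd) with
      h | h | h | h <;> tauto
  have hminus : ∏ d ∈ m.divisors with μ (m / d) = -1, (1 - φ X ^ d) =
      (1 - φ X ^ q₁) * (1 - φ X ^ q₂) := by
    rw [prod_one_sub_pow_eq_of_pow_eq_zero hφ (t := {q₁, q₂}) ?_ ?_, Finset.prod_pair hlt.ne]
    · simp [Finset.insert_subset_iff, hq₁m, hq₂m, hsf.ne_zero, hμq hq₁ hq₁m, hμq hq₂ hq₂m]
    · intro d hd hdq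
      simp only [Finset.mem_filter, Finset.mem_insert, Finset.mem_singleton, not_or] at hd hdq
      refine hbig d hd.1 ?_ hdq.1 hdq.2
      rintro rfl
      simp [hμ] at hd
  have hplus : ∏ d ∈ m.divisors with μ (m / d) = 1, (1 - φ X ^ d) = 1 - φ X := by
    rw [prod_one_sub_pow_eq_of_pow_eq_zero hφ (t := {1}) ?_ ?_, Finset.prod_singleton, pow_one]
    · simp [hsf.ne_zero, hμ]
    · intro d hd hd1
      simp only [Finset.mem_filter, Finset.mem_singleton] at hd hd1
      refine hbig d hd.1 hd1 ?_ ?_ <;> rintro rfl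
      · simp [hμq hq₁ hq₁m] at hd
      · simp [hμq hq₂ hq₂m] at hd
  have h := congrArg φ (cyclotomic_mul_prod_one_sub_X_pow hm)
  simp only [map_mul, map_prod, map_sub, map_one, map_pow] at h
  rwa [hminus, hplus] at h

theorem coeff_geom_sum_sub_X_pow_sub_X_pow {q₁ q₂ k : ℕ} (hlt : q₁ < q₂) (hk : k < q₂ + 2) :
    (∑ i ∈ Finset.range q₁, X ^ i - X ^ q₂ - X ^ (q₂ + 1) : ℤ[X]).coeff k =
      if k < q₁ then 1 else if k < q₂ then 0 else -1 := by
  simp only [coeff_sub, finsetSum_coeff, coeff_X_pow, Finset.sum_ite_eq, Finset.mem_range]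
  split_ifs <;> omega

theorem cyclotomic_inv_coeff_of_moebius_one (m : ℕ) (hm : 1 < m) (hsf : Squarefree m)
    (hμ : μ m = 1) (q₁ q₂ : ℕ) (hq₁ : q₁.Prime) (hq₂ : q₂.Prime)
    (hq₁m : q₁ ∣ m) (hq₂m : q₂ ∣ m) (hlt : q₁ < q₂)
    (hsmall : ∀ p : ℕ, p.Prime → p ∣ m → p = q₁ ∨ q₂ ≤ p)
    (g : PowerSeries ℤ) (hg : (cyclotomic m ℤ : PowerSeries ℤ) * g = 1) :
    ∀ k < q₂ + 2, PowerSeries.coeff k g =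
      if k < q₁ then 1 else if k < q₂ then 0 else -1 := by
  let π := Ideal.Quotient.mk (Ideal.span {(PowerSeries.X : PowerSeries ℤ) ^ (q₂ + 2)})
  let ψ : ℤ[X] →+* _ := π.comp coeToPowerSeries.ringHom
  have hx : ψ X ^ (q₂ + 2) = 0 := by simp [ψ, π, ← map_pow]
  have hgΦ : ψ (cyclotomic m ℤ) * π g = 1 := by
    rw [← map_one π, ← hg, map_mul]
    rfl
  have hΦ := map_cyclotomic_mul_one_sub_pow_mul_one_sub_pow ψ hm hsf hμ hq₁ hq₂ hq₁m hq₂m hlt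
    hsmall hx
  have hgh : π g = ψ (∑ i ∈ Finset.range q₁, X ^ i - X ^ q₂ - X ^ (q₂ + 1)) := by
    refine (IsNilpotent.isUnit_one_sub ⟨_, hx⟩).mul_left_cancel ?_
    simp only [map_sub, map_sum, map_pow]
    rw [one_sub_mul_geom_sum_sub_eq_of_pow_eq_zero hx hq₁.two_le]
    linear_combination (-π g) * hΦ + (1 - ψ X ^ q₁) * (1 - ψ X ^ q₂) * hgΦ
  intro k hk
  rw [PowerSeries.coeff_eq_of_mk_eq hgh hk, coeToPowerSeries.ringHom_apply, coeff_coe,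
    coeff_geom_sum_sub_X_pow_sub_X_pow hlt hk]
end

section
/- Let m > 1 be squarefree with μ(m) = -1. Then 1/Φ_m(x) ≡ 1 - x (mod x^3) if m is odd, and 1/Φ_m(x) ≡ 1 - x + x^2 (mod x^3) if m is even. -/
/-!
Möbius inversion of `∏_{d ∣ n} Φ_d = X ^ n - 1` gives
`Φ_n(x) = ∏_{d ∣ n} (1 - x ^ d) ^ μ(n / d)` for `n > 1` at any nilpotent `x`, where all factors
are units (the signs cancel because `∑_{d ∣ n} μ d = 0`). At `x = X` in `ℤ⟦X⟧ ⧸ (X ^ 3)` only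
`d = 1, 2` survive, so with `μ m = -1` we get `Φ_m ≡ 1 / (1 - X)` for odd `m`, while for even
squarefree `m` we have `μ (m / 2) = 1` and `Φ_m ≡ (1 - X ^ 2) / (1 - X) = 1 + X`, whose inverse is
`1 - X + X ^ 2` modulo `X ^ 3`.
-/

open Polynomial ArithmeticFunction
open scoped ArithmeticFunction.Moebius

namespace ArithmeticFunction

theorem sum_divisors_moebius_eq_zero {n : ℕ} (hn : n ≠ 1) : ∑ d ∈ n.divisors, μ d = 0 := by
  rw [← coe_mul_zeta_apply, moebius_mul_coe_zeta, one_apply_ne hn]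

theorem moebius_div_of_prime_dvd {n p : ℕ} (hp : p.Prime) (hpn : p ∣ n) (hn : Squarefree n) :
    μ (n / p) = -μ n := by
  obtain ⟨k, rfl⟩ := hpn
  have hcop : p.Coprime k := (Nat.squarefree_mul_iff.mp hn).1
  rw [Nat.mul_div_cancel_left k hp.pos, isMultiplicative_moebius.map_mul_of_coprime hcop,
    moebius_apply_prime hp, neg_one_mul, neg_neg]

end ArithmeticFunction

namespace PowerSeries

theorem coeff_eq_of_quotient_mk_eq {R : Type*} [CommRing R] {n k : ℕ} {f g : R⟦X⟧}
    (h : Ideal.Quotient.mk (Ideal.span {X ^ n}) f = Ideal.Quotient.mk _ g) (hk : k < n) :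
    coeff k f = coeff k g := by
  rw [Ideal.Quotient.eq, Ideal.mem_span_singleton, X_pow_dvd_iff] at h
  simpa [sub_eq_zero] using h k hk

end PowerSeries

namespace IsNilpotent

variable {A : Type*} [CommRing A] {x : A}

theorem isUnit_eval_cyclotomic (hx : IsNilpotent x) (n : ℕ) :
    IsUnit ((cyclotomic n A).eval x) := by
  rcases n.eq_zero_or_pos with rfl | hn
  · simp
  refine isUnit_of_dvd_unit ?_ (hx.pow_of_pos hn.ne').isUnit_sub_one
  have hroot : x ^ n - 1 = (X ^ n - 1 : A[X]).eval x := by simp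
  rw [hroot, ← prod_cyclotomic_eq_X_pow_sub_one hn, eval_prod]
  exact Finset.dvd_prod_of_mem _ (Nat.mem_divisors_self n hn.ne')

/-- The unit `1 - x ^ n`, with the junk value `1` at `n = 0`. -/
noncomputable def oneSubPowUnit (hx : IsNilpotent x) (n : ℕ) : Aˣ :=
  if hn : n = 0 then 1 else (hx.pow_of_pos hn).isUnit_one_sub.unit

theorem coe_oneSubPowUnit (hx : IsNilpotent x) {n : ℕ} (hn : n ≠ 0) :
    (hx.oneSubPowUnit n : A) = 1 - x ^ n := by
  simp [oneSubPowUnit, hn]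

theorem oneSubPowUnit_eq_one (hx : IsNilpotent x) {k n : ℕ} (hk : x ^ k = 0) (hkn : k ≤ n) :
    hx.oneSubPowUnit n = 1 := by
  rcases eq_or_ne n 0 with rfl | hn
  · simp [oneSubPowUnit]
  ext
  rw [coe_oneSubPowUnit hx hn, ← Nat.sub_add_cancel hkn, pow_add, hk, mul_zero, sub_zero,
    Units.val_one]

theorem eval_cyclotomic_unit_eq_prod_pow_moebius (hx : IsNilpotent x) {n : ℕ} (hn : 1 < n) :
    (hx.isUnit_eval_cyclotomic n).unit = ∏ d ∈ n.divisors, hx.oneSubPowUnit d ^ μ (n / d) := by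
  have hprod : ∀ k > 0, ∏ d ∈ k.divisors, (hx.isUnit_eval_cyclotomic d).unit =
      -hx.oneSubPowUnit k := by
    intro k hk
    ext
    rw [Units.coe_prod, Units.val_neg, coe_oneSubPowUnit hx hk.ne']
    simp only [IsUnit.unit_spec]
    rw [← eval_prod, prod_cyclotomic_eq_X_pow_sub_one hk]
    simp
  rw [← prod_eq_iff_prod_pow_moebius_eq.mp hprod n (by omega)]
  simp_rw [← neg_one_mul (hx.oneSubPowUnit _), mul_zpow, Finset.prod_mul_distrib,
    Finset.prod_zpow_eq_zpow_sum, Nat.sum_divisorsAntidiagonal (fun a _ => μ a),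
    sum_divisors_moebius_eq_zero hn.ne', zpow_zero, one_mul]
  exact Nat.prod_divisorsAntidiagonal' (fun a b => hx.oneSubPowUnit b ^ μ a)

end IsNilpotent

section CubeZero

variable {A : Type*} [CommRing A] {x : A}

theorem eval_cyclotomic_mul_one_sub_of_moebius_eq_neg_one (hx3 : x ^ 3 = 0) {n : ℕ} (hn : 1 < n)
    (hsf : Squarefree n) (hμ : μ n = -1) :
    (cyclotomic n A).eval x * (1 - x) = if Odd n then 1 else 1 - x ^ 2 := by
  have hx : IsNilpotent x := ⟨3, hx3⟩
  have hw : ∀ d, 2 < d → hx.oneSubPowUnit d ^ μ (n / d) = 1 := fun d hd => by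
    rw [hx.oneSubPowUnit_eq_one hx3 hd, one_zpow]
  have hone : 1 ∈ n.divisors := Nat.one_mem_divisors.2 (by omega)
  have hu := hx.eval_cyclotomic_unit_eq_prod_pow_moebius hn
  rcases Nat.even_or_odd n with heven | hodd
  · have hμ2 : μ (n / 2) = 1 := by
      rw [moebius_div_of_prime_dvd Nat.prime_two heven.two_dvd hsf, hμ, neg_neg]
    rw [Finset.prod_eq_mul 1 2 (by norm_num)
        (fun d hd _ => hw d (by have := Nat.pos_of_mem_divisors hd; omega))
        (fun h => (h hone).elim)
        (fun h => (h (Nat.mem_divisors.2 ⟨heven.two_dvd, by omega⟩)).elim),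
      Nat.div_one, hμ, hμ2, zpow_neg_one, zpow_one] at hu
    have hu' : (hx.isUnit_eval_cyclotomic n).unit * hx.oneSubPowUnit 1 = hx.oneSubPowUnit 2 := by
      rw [hu, inv_mul_cancel_comm]
    simpa [IsNilpotent.coe_oneSubPowUnit, Nat.not_odd_iff_even.2 heven] using
      congrArg Units.val hu'
  · have hw' : ∀ d ∈ n.divisors, d ≠ 1 → hx.oneSubPowUnit d ^ μ (n / d) = 1 := by
      intro d hd hd1
      have hd2 : d ≠ 2 := by
        rintro rfl
        exact Nat.not_even_iff_odd.2 hodd (even_iff_two_dvd.2 (Nat.dvd_of_mem_divisors hd))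
      exact hw d (by have := Nat.pos_of_mem_divisors hd; omega)
    rw [Finset.prod_eq_single 1 hw' (fun h => (h hone).elim), Nat.div_one, hμ,
      zpow_neg_one] at hu
    have hu' : (hx.isUnit_eval_cyclotomic n).unit * hx.oneSubPowUnit 1 = 1 := by
      rw [hu, inv_mul_cancel]
    simpa [IsNilpotent.coe_oneSubPowUnit, hodd] using congrArg Units.val hu'

theorem eval_cyclotomic_mul_eq_one_of_moebius_eq_neg_one (hx3 : x ^ 3 = 0) {n : ℕ}
    (hn : 1 < n) (hsf : Squarefree n) (hμ : μ n = -1) :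
    (cyclotomic n A).eval x * (1 - x + (if Odd n then 0 else 1) * x ^ 2) = 1 := by
  have h := eval_cyclotomic_mul_one_sub_of_moebius_eq_neg_one hx3 hn hsf hμ
  split_ifs at h ⊢
  · simpa using h
  · linear_combination (1 + x ^ 2) * h + ((cyclotomic n A).eval x - x) * hx3

end CubeZero

theorem cyclotomic_inv_coeff_of_moebius_neg_one (m : ℕ) (hm : 1 < m) (hsf : Squarefree m)
    (hμ : μ m = -1)
    (g : PowerSeries ℤ) (hg : (cyclotomic m ℤ : PowerSeries ℤ) * g = 1) :
    PowerSeries.coeff 0 g = 1 ∧ PowerSeries.coeff 1 g = -1 ∧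
      PowerSeries.coeff 2 g = if Odd m then 0 else 1 := by
  set q := Ideal.Quotient.mk (Ideal.span {(PowerSeries.X : PowerSeries ℤ) ^ 3})
  have hX3 : q PowerSeries.X ^ 3 = 0 := by
    rw [← map_pow, Ideal.Quotient.eq_zero_iff_mem]
    exact Ideal.mem_span_singleton_self _
  have hΦ : q (cyclotomic m ℤ) = (cyclotomic m _).eval (q PowerSeries.X) := by
    rw [← eval₂_C_X_eq_coe, hom_eval₂, RingHom.ext_int (q.comp _) (Int.castRingHom _),
      ← eval_map, map_cyclotomic]
  have hqg : q g = q (1 - PowerSeries.X +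
      PowerSeries.C (if Odd m then 0 else 1) * PowerSeries.X ^ 2) := by
    refine (left_inv_eq_right_inv ?_
      (eval_cyclotomic_mul_eq_one_of_moebius_eq_neg_one hX3 hm hsf hμ)).trans ?_
    · rw [← hΦ, ← map_mul, mul_comm, hg, map_one]
    · split_ifs <;> simp
  refine ⟨?_, ?_, ?_⟩ <;> rw [PowerSeries.coeff_eq_of_quotient_mk_eq hqg (by norm_num)] <;>
    split_ifs <;> simp [PowerSeries.coeff_X_pow, PowerSeries.coeff_X]
end

section
/- Let m > 1 be squarefree, let p_1 < ⋯ < p_t be primes congruent to 1 mod m with m < p_1 and p_t < 2p_1, and let m̄_1 be the product p_1⋯p_t, multiplied additionally by a prime q > 2p_1 if t is odd (so that μ(m̄_1) = 1). Then c(m̄_1 m, k) = a(m_1 m, k) for all k < 2p_1, where m_1 is the corresponding product with μ(m_1) = -1; equivalently, 1/Φ_{m̄_1 m}(x) ≡ (1/Φ_m(x))·(1 - μ(m)(x^{p_1} + ⋯ + x^{p_t})) (mod x^{2p_1}) as formal power series. -/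
/-!
Write `n = p_1 ⋯ p_t m`. Since `q ∤ n`, `Φ_n(x^q) = Φ_{nq}(x) Φ_n(x)`, and the two factors are
exactly `Φ_{m̄₁ m}` and `Φ_{m₁ m}`. As `Φ_n(0) = 1`, the left side is `≡ 1 (mod x^q)`, so
`1 / Φ_{m̄₁ m} ≡ Φ_{m₁ m} (mod x^q)`, and `q > 2 p_1`.
-/

open Polynomial ArithmeticFunction

namespace Polynomial

variable {R : Type*} [CommRing R]

theorem X_pow_dvd_expand_sub_C_coeff_zero (q : ℕ) (f : R[X]) :
    X ^ q ∣ expand R q f - C (f.coeff 0) := by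
  refine ⟨expand R q (divX f), ?_⟩
  nth_rw 1 [← X_mul_divX_add f]
  rw [map_add, map_mul, expand_X, expand_C, add_sub_cancel_right]

theorem X_pow_dvd_one_sub_expand_cyclotomic (q : ℕ) {n : ℕ} (hn : 1 < n) :
    X ^ q ∣ 1 - expand R q (cyclotomic n R) := by
  rw [← dvd_neg, neg_sub, ← C_1, ← cyclotomic_coeff_zero R hn]
  exact X_pow_dvd_expand_sub_C_coeff_zero q _

end Polynomial

namespace PowerSeries

variable {R : Type*} [CommRing R]

theorem coeff_eq_of_mul_eq_one_of_X_pow_dvd {A B : R[X]} {g : R⟦X⟧} {N k : ℕ}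
    (hg : (A : R⟦X⟧) * g = 1) (hAB : Polynomial.X ^ N ∣ 1 - A * B) (hk : k < N) :
    coeff k g = B.coeff k := by
  have hdiff : g - (B : R⟦X⟧) = g * ((1 - A * B : R[X]) : R⟦X⟧) := by
    rw [Polynomial.coe_sub, Polynomial.coe_one, Polynomial.coe_mul, mul_sub, mul_one,
      ← mul_assoc, mul_comm g, hg, one_mul]
  have hdvd : (X : R⟦X⟧) ^ N ∣ g - (B : R⟦X⟧) := by
    rw [hdiff]
    refine Dvd.dvd.mul_left ?_ g
    simpa using map_dvd (Polynomial.coeToPowerSeries.ringHom (R := R)) hAB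
  have := X_pow_dvd_iff.mp hdvd k hk
  rwa [map_sub, Polynomial.coeff_coe, sub_eq_zero] at this

end PowerSeries

theorem Nat.Prime.not_dvd_prod_of_lt {ι : Type*} {q : ℕ} (hq : q.Prime) (s : Finset ι)
    {f : ι → ℕ} (hf : ∀ i ∈ s, 0 < f i ∧ f i < q) : ¬ q ∣ ∏ i ∈ s, f i := by
  rw [Prime.dvd_finsetProd_iff hq.prime]
  rintro ⟨i, hi, hdvd⟩
  have := Nat.le_of_dvd (hf i hi).1 hdvd
  have := (hf i hi).2
  omega

theorem cyclotomic_inv_coeff_eq_cyclotomic_coeff (m t : ℕ) (hm : 1 < m)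
    (ht : 0 < t) (p : Fin t → ℕ) (hmono : StrictMono p)
    (hprime : ∀ i, (p i).Prime)
    (hlow : m < p ⟨0, ht⟩) (hhigh : p ⟨t - 1, by omega⟩ < 2 * p ⟨0, ht⟩)
    (q : ℕ) (hq : q.Prime) (hq2 : 2 * p ⟨0, ht⟩ < q)
    (m₁ : ℕ) (hm₁ : m₁ = if Even t then (∏ i, p i) * q else ∏ i, p i)
    (mbar₁ : ℕ) (hmbar₁ : mbar₁ = if Odd t then (∏ i, p i) * q else ∏ i, p i)
    (g : PowerSeries ℤ) (hg : (cyclotomic (mbar₁ * m) ℤ : PowerSeries ℤ) * g = 1)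
    (k : ℕ) (hk : k < 2 * p ⟨0, ht⟩) :
    PowerSeries.coeff k g = (cyclotomic (m₁ * m) ℤ).coeff k := by
  set P := ∏ i, p i
  have hp_lt : ∀ i, p i < q := fun i =>
    (hmono.monotone (Fin.mk_le_mk.mpr (by omega : i.val ≤ t - 1))).trans_lt (by omega)
  have hP_pos : 0 < P := Finset.prod_pos fun i _ => (hprime i).pos
  have hqn : ¬ q ∣ P * m := by
    rw [hq.dvd_mul, not_or]
    exact ⟨hq.not_dvd_prod_of_lt _ fun i _ => ⟨(hprime i).pos, hp_lt i⟩,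
      fun h => by have := Nat.le_of_dvd (by omega) h; omega⟩
  have hn : 1 < P * m := lt_of_lt_of_le hm (Nat.le_mul_of_pos_left m hP_pos)
  have hprod : cyclotomic (mbar₁ * m) ℤ * cyclotomic (m₁ * m) ℤ =
      expand ℤ q (cyclotomic (P * m) ℤ) := by
    rw [cyclotomic_expand_eq_cyclotomic_mul hq hqn]
    rcases Nat.even_or_odd t with he | ho
    · rw [hm₁, hmbar₁, if_pos he, if_neg (Nat.not_odd_iff_even.mpr he), mul_comm, mul_right_comm]
    · rw [hm₁, hmbar₁, if_pos ho, if_neg (Nat.not_even_iff_odd.mpr ho), mul_right_comm]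
  exact PowerSeries.coeff_eq_of_mul_eq_one_of_X_pow_dvd hg
    (hprod ▸ X_pow_dvd_one_sub_expand_cyclotomic q hn) (by omega)
end
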